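/- arXiv:1304.7168 — 3 statements merged into one kernel-verified Lean document; each statement's English description precedes it below -/
import Mathlib

section
/- Let Π be a normal non-deterministic logic program and define the sequence of pairs of subsets of N by I₀ = (∅, ∅) and I_{n+1} = W_Π(I_n) for n ∈ ℕ. Then the sequence is monotone: for every n, I_n ≤ I_{n+1} componentwise (pos(I_n) ⊆ pos(I_{n+1}) and neg(I_n) ⊆ neg(I_{n+1})). -/
/-- A (negation-free) non-deterministic logic rule: a head and a finite body of
non-deterministic atoms (elements of `N := Set B`). -/
structure NDRule (B : Type*) where
  head : Set B
  body : Finset (Set B)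

/-- The immediate consequence operator of a negation-free non-deterministic
logic program: the set of heads of rules all of whose body atoms belong to
`J`. -/
def ndT {B : Type*} (prog : Set (NDRule B)) (J : Set (Set B)) : Set (Set B) :=
  {h | ∃ r ∈ prog, r.head = h ∧ ∀ b ∈ r.body, b ∈ J}

/-- The least fixpoint of the immediate consequence operator of a
negation-free non-deterministic logic program (by Knaster–Tarski, the
intersection of all prefixed points). -/
def ndLfp {B : Type*} (prog : Set (NDRule B)) : Set (Set B) :=
  ⋂₀ {J | ndT prog J ⊆ J}

/-- A normal non-deterministic logic rule: a head (an element of `N`), a finite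
positive body and a finite negative body of non-deterministic atoms. -/
structure NNDRule (B : Type*) where
  head : Set B
  pos : Finset (Set B)
  neg : Finset (Set B)

/-- The non-deterministic reduct of a normal program with respect to a set `P`
of non-deterministic atoms: the negation-free rules `head ← positive body` for
each rule none of whose negative body atoms belongs to `P`. -/
def ndReduct {B : Type*} (prog : Set (NNDRule B)) (P : Set (Set B)) : Set (NDRule B) :=
  {r' | ∃ r ∈ prog, (∀ b ∈ r.neg, b ∉ P) ∧ r' = ⟨r.head, r.pos⟩}

/-- `ξ ⊆ N` is an unfounded set of `prog` with respect to the pair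
`I = (pos I, neg I)` if for every `a ∈ ξ` and every rule of `prog` with head
`a`, some positive body atom lies in `neg I`, or some negative body atom lies
in `pos I`, or some positive body atom lies in `ξ`. -/
def unfoundedSet {B : Type*} (prog : Set (NNDRule B))
    (I : Set (Set B) × Set (Set B)) (ξ : Set (Set B)) : Prop :=
  ∀ a ∈ ξ, ∀ r ∈ prog, r.head = a →
    (∃ b ∈ r.pos, b ∈ I.2) ∨ (∃ b ∈ r.neg, b ∈ I.1) ∨ (∃ b ∈ r.pos, b ∈ ξ)

/-- The greatest unfounded set of `prog` with respect to `I`: the union of all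
unfounded sets of `prog` with respect to `I`. -/
def Uop {B : Type*} (prog : Set (NNDRule B))
    (I : Set (Set B) × Set (Set B)) : Set (Set B) :=
  ⋃₀ {ξ | unfoundedSet prog I ξ}

/-- The well-founded immediate consequence operator: the set of heads of rules
all of whose positive body atoms lie in `pos I` and all of whose negative body
atoms lie in `neg I`. -/
def Twf {B : Type*} (prog : Set (NNDRule B))
    (I : Set (Set B) × Set (Set B)) : Set (Set B) :=
  {h | ∃ r ∈ prog, r.head = h ∧ (∀ b ∈ r.pos, b ∈ I.1) ∧ ∀ b ∈ r.neg, b ∈ I.2}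

/-- The well-founded operator `W_Π(I) = (T_Π(I), U_Π(I))`. -/
def Wop {B : Type*} (prog : Set (NNDRule B))
    (I : Set (Set B) × Set (Set B)) : Set (Set B) × Set (Set B) :=
  (Twf prog I, Uop prog I)

/-- A pair `I` of subsets of `N` is a total non-deterministic interpretation if
its components are disjoint and jointly exhaust `N`. -/
def isTotalInterp {B : Type*} (I : Set (Set B) × Set (Set B)) : Prop :=
  Disjoint I.1 I.2 ∧ I.1 ∪ I.2 = Set.univ

/-- A total non-deterministic interpretation `I` is a total non-deterministic
model of `prog` if for every rule whose positive body atoms all lie in `pos I`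
and whose negative body atoms all lie in `neg I`, the head lies in `pos I`. -/
def isTotalModel {B : Type*} (prog : Set (NNDRule B))
    (I : Set (Set B) × Set (Set B)) : Prop :=
  isTotalInterp I ∧
    ∀ r ∈ prog, (∀ b ∈ r.pos, b ∈ I.1) → (∀ b ∈ r.neg, b ∈ I.2) → r.head ∈ I.1


lemma Wop_mono {B : Type*} (prog : Set (NNDRule B))
    {I J : Set (Set B) × Set (Set B)} (h1 : I.1 ⊆ J.1) (h2 : I.2 ⊆ J.2) :
    (Wop prog I).1 ⊆ (Wop prog J).1 ∧ (Wop prog I).2 ⊆ (Wop prog J).2 := by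
  constructor
  · rintro h ⟨r, hr, hh, hp, hn⟩
    exact ⟨r, hr, hh, fun b hb => h1 (hp b hb), fun b hb => h2 (hn b hb)⟩
  · rintro a ⟨ξ, hξ, ha⟩
    refine ⟨ξ, fun x hx r hr hh => ?_, ha⟩
    rcases hξ x hx r hr hh with ⟨b, hb, hb2⟩ | ⟨b, hb, hb1⟩ | h
    · exact Or.inl ⟨b, hb, h2 hb2⟩
    · exact Or.inr (Or.inl ⟨b, hb, h1 hb1⟩)
    · exact Or.inr (Or.inr h)

/-- The sequence `I₀ = (∅, ∅)`, `I_{n+1} = W_Π(I_n)` of iterates of the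
well-founded operator is monotone: `I_n ≤ I_{n+1}` componentwise for every
`n ∈ ℕ`. -/
theorem wf_iterates_monotone {B : Type*} (prog : Set (NNDRule B))
    (I : ℕ → Set (Set B) × Set (Set B))
    (h0 : I 0 = (∅, ∅)) (hs : ∀ n, I (n + 1) = Wop prog (I n)) :
    ∀ n, (I n).1 ⊆ (I (n + 1)).1 ∧ (I n).2 ⊆ (I (n + 1)).2 := by
  intro n
  induction n with
  | zero =>
    rw [h0, hs 0, h0]
    exact ⟨fun x hx => hx.elim, fun x hx => hx.elim⟩
  | succ n ih =>
    have := Wop_mono prog ih.1 ih.2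
    rw [← hs n, ← hs (n+1)] at this
    exact this
end

section
/- Let Π be a normal non-deterministic logic program and I a total non-deterministic model of Π. Then the greatest unfounded set of Π with respect to I equals the complement in N of the least fixpoint of the immediate consequence operator of the reduct: U_Π(I) = N \ lfp(T_{Π^{pos(I)}}). -/

lemma ndLfp_le {B : Type*} {prog : Set (NDRule B)} {J : Set (Set B)}
    (hJ : ndT prog J ⊆ J) : ndLfp prog ⊆ J :=
  Set.sInter_subset_of_mem hJ

lemma ndT_ndLfp_le {B : Type*} (prog : Set (NDRule B)) :
    ndT prog (ndLfp prog) ⊆ ndLfp prog := by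
  intro h hh
  apply Set.mem_sInter.2
  intro J hJ
  apply hJ
  obtain ⟨r, hr, hhd, hb⟩ := hh
  exact ⟨r, hr, hhd, fun b hb' => ndLfp_le hJ (hb b hb')⟩

/-- For a total non-deterministic model `I` of a normal non-deterministic logic
program, the greatest unfounded set with respect to `I` equals the complement
in `N` of the least fixpoint of the immediate consequence operator of the
reduct with respect to `pos I`. -/
theorem Uop_eq_compl_lfp_reduct {B : Type*} (prog : Set (NNDRule B))
    (I : Set (Set B) × Set (Set B)) (hI : isTotalModel prog I) :
    Uop prog I = (ndLfp (ndReduct prog I.1))ᶜ := by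
  obtain ⟨⟨hdisj, htot⟩, hmod⟩ := hI
  set L := ndLfp (ndReduct prog I.1) with hL
  have hLI : L ⊆ I.1 := by
    apply ndLfp_le
    rintro h ⟨r', ⟨r, hr, hneg, rfl⟩, hhd, hb⟩
    have : r.head ∈ I.1 := by
      apply hmod r hr hb
      intro b hb'
      have : b ∈ I.1 ∪ I.2 := htot ▸ Set.mem_univ b
      rcases this with h1 | h2
      · exact absurd h1 (hneg b hb')
      · exact h2
    exact hhd ▸ this
  apply Set.eq_of_subset_of_subset
  · rintro a ⟨ξ, hξ, haξ⟩
    intro haL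
    -- show L \ ξ is prefixed, hence L ⊆ L \ ξ, contradicting a ∈ L ∩ ξ
    have hpre : ndT (ndReduct prog I.1) (L \ ξ) ⊆ L \ ξ := by
      rintro h ⟨r', ⟨r, hr, hneg, rfl⟩, hhd, hb⟩
      have hhL : h ∈ L := by
        apply ndT_ndLfp_le
        exact ⟨⟨r.head, r.pos⟩, ⟨r, hr, hneg, rfl⟩, hhd, fun b hb' => (hb b hb').1⟩
      refine ⟨hhL, fun hhξ => ?_⟩
      rcases hξ h hhξ r hr hhd with ⟨b, hb', hb2⟩ | ⟨b, hb', hb1⟩ | ⟨b, hb', hbξ⟩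
      · exact hdisj.ne_of_mem (hLI (hb b hb').1) hb2 rfl
      · exact hneg b hb' hb1
      · exact (hb b hb').2 hbξ
    exact (ndLfp_le hpre haL).2 haξ
  · intro a haL
    refine ⟨Lᶜ, ?_, haL⟩
    intro x hx r hr hhd
    by_cases hneg : ∀ b ∈ r.neg, b ∉ I.1
    · by_cases hpos : ∀ b ∈ r.pos, b ∈ L
      · exfalso
        apply hx
        apply ndT_ndLfp_le
        exact ⟨⟨r.head, r.pos⟩, ⟨r, hr, hneg, rfl⟩, hhd, hpos⟩
      · push_neg at hpos
        obtain ⟨b, hb, hbL⟩ := hpos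
        exact Or.inr (Or.inr ⟨b, hb, hbL⟩)
    · push_neg at hneg
      obtain ⟨b, hb, hb1⟩ := hneg
      exact Or.inr (Or.inl ⟨b, hb, hb1⟩)
end

section
/- Let Π be a normal non-deterministic logic program and I a total non-deterministic model of Π. Then the least fixpoint of the immediate consequence operator of the reduct is contained in the well-founded immediate consequence of I: lfp(T_{Π^{pos(I)}}) ⊆ T_Π(I). -/
/-- For a total non-deterministic model `I` of a normal non-deterministic logic
program, the least fixpoint of the immediate consequence operator of the reduct
with respect to `pos I` is contained in the well-founded immediate consequence
of `I`. -/
theorem lfp_reduct_subset_Twf {B : Type*} (prog : Set (NNDRule B))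
    (I : Set (Set B) × Set (Set B)) (hI : isTotalModel prog I) :
    ndLfp (ndReduct prog I.1) ⊆ Twf prog I := by
  intro h hh
  apply hh
  intro x hx
  obtain ⟨r', hr', hhead, hbody⟩ := hx
  obtain ⟨r, hr, hneg, rfl⟩ := hr'
  refine ⟨r, hr, hhead, ?_, ?_⟩
  · intro b hb
    have := hbody b hb
    obtain ⟨r2, hr2, hhead2, hpos2, hneg2⟩ := this
    exact hhead2 ▸ hI.2 r2 hr2 hpos2 hneg2
  · intro b hb
    have htot := hI.1.2
    have : b ∈ I.1 ∪ I.2 := htot ▸ Set.mem_univ b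
    rcases this with h1 | h2
    · exact absurd h1 (hneg b hb)
    · exact h2
end
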